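/- arXiv:2207.08853 — 3 statements merged into one kernel-verified Lean document; each statement's English description precedes it below -/
import Mathlib

section
/- Let n be a positive integer and let f : {0,1}^n → {−1, 1} be any Boolean function. Then f can be realized by a polynomial kernel perceptron of degree n: there exist real numbers α_z for z ∈ {0,1}^n and b ∈ ℝ such that for every x ∈ {0,1}^n, f(x) = σ( Σ_{z ∈ {0,1}^n} α_z f(z) ⟨z, x⟩^n + b ), where σ(t) = 1 for t ≥ 0 and σ(t) = −1 for t < 0. -/
/-- The activation function: `σ(t) = 1` for `t ≥ 0` and `σ(t) = −1` for `t < 0`. -/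
noncomputable def perceptronSign (t : ℝ) : ℝ := if 0 ≤ t then 1 else -1

/-- The embedding of a Boolean vector `z ∈ {0,1}^n` into `ℝ^n`. -/
def boolVec {n : ℕ} (z : Fin n → Bool) : Fin n → ℝ := fun k => if z k then 1 else 0

/-!
Identify `{0,1}^n` with the subsets of `Fin n`, so that `⟨z, x⟩ = #(z ∩ x)`. Sorting the maps
`Fin d → z ∩ x` by their image gives `#(z ∩ x) ^ d + 1 = ∑_{S ⊆ z ∩ x} w S`, where `w S` is the
number of maps `Fin d` onto `S`, plus `1` for `S = ∅`; all weights are positive once `d ≥ n`.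
So the Gram matrix of the kernel is `Mᵀ (diag w) M` with `M S A = [S ⊆ A]` injective, hence
positive definite and invertible. Solving `β ᵥ* K = f` and putting `α z = β z * f z` (recall
`f z ^ 2 = 1`), `b = ∑ β` makes the argument of `σ` equal to `f x ∈ {±1}` on the nose.
-/

open Finset Matrix

section PolynomialKernel

variable {ι : Type*} [Fintype ι] [DecidableEq ι]

def numMapsOnto (d : ℕ) (S : Finset ι) : ℕ := #{g : Fin d → ι | univ.image g = S}

theorem sum_powerset_numMapsOnto (d : ℕ) (T : Finset ι) :
    ∑ S ∈ T.powerset, numMapsOnto d S = #T ^ d := by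
  have hmaps : Set.MapsTo (fun g : Fin d → ι => univ.image g)
      (Fintype.piFinset fun _ : Fin d => T : Set (Fin d → ι)) (T.powerset : Set (Finset ι)) := by
    intro g hg
    simpa [Set.range_subset_iff] using hg
  rw [← Fintype.card_piFinset_const, card_eq_sum_card_fiberwise hmaps]
  refine sum_congr rfl fun S hS => ?_
  rw [numMapsOnto]
  congr 1
  ext g
  simp only [mem_filter, Fintype.mem_piFinset, mem_univ, true_and, iff_and_self]
  rintro rfl i
  exact mem_powerset.mp hS (mem_image_of_mem g (mem_univ i))

theorem numMapsOnto_pos {d : ℕ} {S : Finset ι} (hS : S.Nonempty) (hd : #S ≤ d) :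
    0 < numMapsOnto d S := by
  obtain ⟨s₀, hs₀⟩ := hS
  let g : Fin d → ι := fun i => if h : (i : ℕ) < #S then S.equivFin.symm ⟨i, h⟩ else s₀
  refine card_pos.mpr ⟨g, mem_filter.mpr ⟨mem_univ g, ?_⟩⟩
  ext a
  simp only [mem_image, mem_univ, true_and]
  constructor
  · rintro ⟨i, rfl⟩
    unfold g
    split_ifs <;> simp [hs₀]
  · intro ha
    let j := S.equivFin ⟨a, ha⟩
    refine ⟨⟨j, j.2.trans_le hd⟩, ?_⟩
    simp [g, j]

def kernelWeight (d : ℕ) (S : Finset ι) : ℝ := numMapsOnto d S + if S = ∅ then 1 else 0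

theorem kernelWeight_pos {d : ℕ} {S : Finset ι} (hd : #S ≤ d) : 0 < kernelWeight d S := by
  rcases S.eq_empty_or_nonempty with rfl | hS
  · simp only [kernelWeight, if_true]
    positivity
  · have := numMapsOnto_pos hS hd
    simp only [kernelWeight, if_neg hS.ne_empty, add_zero]
    positivity

theorem sum_powerset_kernelWeight (d : ℕ) (T : Finset ι) :
    ∑ S ∈ T.powerset, kernelWeight d S = (#T : ℝ) ^ d + 1 := by
  simp only [kernelWeight, sum_add_distrib, sum_ite_eq', empty_mem_powerset, if_true]
  exact_mod_cast congrArg (· + 1) (sum_powerset_numMapsOnto d T)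

variable (ι) in
def subsetMatrix : Matrix (Finset ι) (Finset ι) ℝ := of fun S A => if S ⊆ A then 1 else 0

variable (ι) in
def polyKernelMatrix (d : ℕ) : Matrix (Finset ι) (Finset ι) ℝ :=
  of fun A B => (#(A ∩ B) : ℝ) ^ d + 1

theorem polyKernelMatrix_eq_transpose_mul_diagonal_mul (d : ℕ) :
    polyKernelMatrix ι d = (subsetMatrix ι)ᵀ * diagonal (kernelWeight d) * subsetMatrix ι := by
  ext A B
  have hterm (S : Finset ι) :
      ((subsetMatrix ι)ᵀ * diagonal (kernelWeight d) : Matrix _ _ ℝ) A S * subsetMatrix ι S B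
        = if S ⊆ A ∩ B then kernelWeight d S else 0 := by
    simp only [mul_diagonal, transpose_apply, subsetMatrix, of_apply, subset_inter_iff]
    split_ifs <;> simp_all
  rw [mul_apply, sum_congr rfl fun S _ => hterm S, ← sum_filter, filter_subset_univ,
    sum_powerset_kernelWeight]
  rfl

theorem subsetMatrix_mulVec_injective : Function.Injective (subsetMatrix ι).mulVec := by
  suffices h : ∀ β, subsetMatrix ι *ᵥ β = 0 → β = 0 from
    fun β γ hβγ => sub_eq_zero.mp (h _ (by rw [mulVec_sub, hβγ, sub_self]))
  intro β hβ
  by_contra hne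
  have hsupp : ({A | β A ≠ 0} : Finset (Finset ι)).Nonempty := by
    obtain ⟨A, hA⟩ := Function.ne_iff.mp hne
    exact ⟨A, by simpa using hA⟩
  -- A largest set in the support of `β` has no proper superset in the support.
  obtain ⟨A, hA, hmax⟩ := exists_max_image _ card hsupp
  have hrow : (subsetMatrix ι *ᵥ β) A = β A := by
    rw [mulVec, dotProduct, sum_eq_single A]
    · simp [subsetMatrix]
    · intro B _ hBA
      by_cases hAB : A ⊆ B
      · have hB : β B = 0 := by
          by_contra hB
          exact (card_lt_card (ssubset_of_subset_of_ne hAB (Ne.symm hBA))).not_ge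
            (hmax B (by simpa using hB))
        simp [hB]
      · simp [subsetMatrix, hAB]
    · simp
  exact (mem_filter.mp hA).2 (hrow ▸ congrFun hβ A)

theorem polyKernelMatrix_posDef {d : ℕ} (hd : Fintype.card ι ≤ d) :
    (polyKernelMatrix ι d).PosDef := by
  rw [polyKernelMatrix_eq_transpose_mul_diagonal_mul, ← conjTranspose_eq_transpose_of_trivial]
  exact (PosDef.diagonal fun S => kernelWeight_pos ((card_le_univ S).trans hd)
    ).conjTranspose_mul_mul_same subsetMatrix_mulVec_injective

theorem exists_vecMul_polyKernelMatrix_eq {d : ℕ} (hd : Fintype.card ι ≤ d)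
    (g : Finset ι → ℝ) : ∃ β, β ᵥ* polyKernelMatrix ι d = g :=
  vecMul_surjective_iff_isUnit.mpr (polyKernelMatrix_posDef hd).isUnit g

variable (ι) in
def boolFunEquivFinset : (ι → Bool) ≃ Finset ι where
  toFun z := {k | z k}
  invFun A k := k ∈ A
  left_inv z := by ext; simp
  right_inv A := by ext; simp

end PolynomialKernel

theorem sum_boolVec_mul_boolVec {n : ℕ} (z x : Fin n → Bool) :
    ∑ k, boolVec z k * boolVec x k
      = #(boolFunEquivFinset (Fin n) z ∩ boolFunEquivFinset (Fin n) x) := by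
  simp [boolVec, boolFunEquivFinset, ← ite_and, filter_and, inter_comm]

theorem perceptronSign_of_eq_one_or_eq_neg_one {t : ℝ} (ht : t = 1 ∨ t = -1) :
    perceptronSign t = t := by
  rcases ht with rfl | rfl <;> norm_num [perceptronSign]

theorem boolean_function_realized_by_degree_n_perceptron_general (n : ℕ)
    (f : (Fin n → Bool) → ℝ) (hf : ∀ x, f x = 1 ∨ f x = -1) :
    ∃ α : (Fin n → Bool) → ℝ, ∃ b : ℝ, ∀ x : Fin n → Bool,
      f x = perceptronSign
        (∑ z : Fin n → Bool, α z * f z * (∑ k, boolVec z k * boolVec x k) ^ n + b) := by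
  let e := boolFunEquivFinset (Fin n)
  obtain ⟨β, hβ⟩ := exists_vecMul_polyKernelMatrix_eq (Fintype.card_fin n).le (f ∘ e.symm)
  refine ⟨fun z => β (e z) * f z, ∑ A, β A, fun x => ?_⟩
  have hlabel (z : Fin n → Bool) : β (e z) * f z * f z = β (e z) := by
    rcases hf z with h | h <;> rw [h] <;> ring
  have hsum : ∑ z, β (e z) * f z * f z * (∑ k, boolVec z k * boolVec x k) ^ n + ∑ A, β A
      = f x := calc
    _ = ∑ z, β (e z) * ((#(e z ∩ e x) : ℝ) ^ n + 1) := by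
      simp only [hlabel, sum_boolVec_mul_boolVec, mul_add, mul_one, sum_add_distrib,
        e.sum_comp β]
      rfl
    _ = (β ᵥ* polyKernelMatrix _ n) (e x) :=
      e.sum_comp fun A => β A * ((#(A ∩ e x) : ℝ) ^ n + 1)
    _ = f x := by simp [hβ, e]
  rw [hsum, perceptronSign_of_eq_one_or_eq_neg_one (hf x)]

/-- Every Boolean function `f : {0,1}^n → {−1,1}` can be realized by a polynomial
kernel perceptron of degree `n`: there are reals `α_z` (`z ∈ {0,1}^n`) and `b ∈ ℝ` such that
`f(x) = σ( Σ_z α_z f(z) ⟨z,x⟩^n + b )` for all `x ∈ {0,1}^n`. -/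
theorem boolean_function_realized_by_degree_n_perceptron (n : ℕ) (hn : 0 < n)
    (f : (Fin n → Bool) → ℝ) (hf : ∀ x, f x = 1 ∨ f x = -1) :
    ∃ α : (Fin n → Bool) → ℝ, ∃ b : ℝ, ∀ x : Fin n → Bool,
      f x = perceptronSign
        (∑ z : Fin n → Bool, α z * f z * (∑ k, boolVec z k * boolVec x k) ^ n + b) :=
  boolean_function_realized_by_degree_n_perceptron_general n f hf
end

section
/- Let n be a positive integer and let d be a positive integer with d < n. Then there exists a Boolean function f : {0,1}^n → {−1, 1} that cannot be realized by a polynomial kernel perceptron of degree d: for all real numbers α_z (z ∈ {0,1}^n) and b ∈ ℝ there exists x ∈ {0,1}^n with f(x) ≠ σ( Σ_{z ∈ {0,1}^n} α_z f(z) ⟨z, x⟩^d + b ), where σ(t) = 1 for t ≥ 0 and σ(t) = −1 for t < 0. -/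
namespace AuxParity

noncomputable def sgn (t : Bool) : ℝ := if t then -1 else 1

lemma sgn_not (t : Bool) : sgn (!t) = - sgn t := by cases t <;> simp [sgn]

def flip {n : ℕ} (k0 : Fin n) (x : Fin n → Bool) : Fin n → Bool :=
  Function.update x k0 (!x k0)

lemma flip_invol {n : ℕ} (k0 : Fin n) : Function.Involutive (flip (n := n) k0) := by
  intro x
  simp [flip, Function.update_idem]

lemma prod_flip {n : ℕ} (k0 : Fin n) (x : Fin n → Bool) :
    (∏ k, sgn (flip k0 x k)) = -∏ k, sgn (x k) := by
  have h1 : (fun k => sgn (flip k0 x k)) =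
      Function.update (fun k => sgn (x k)) k0 (sgn (!x k0)) := by
    funext k
    by_cases h : k = k0
    · subst h; simp [flip]
    · simp [flip, Function.update_of_ne h]
  calc (∏ k, sgn (flip k0 x k))
      = ∏ k, Function.update (fun k => sgn (x k)) k0 (sgn (!x k0)) k := by rw [h1]
    _ = sgn (!x k0) * ∏ k ∈ Finset.univ \ {k0}, sgn (x k) :=
        Finset.prod_update_of_mem (Finset.mem_univ k0) _ _
    _ = -(sgn (x k0) * ∏ k ∈ Finset.univ \ {k0}, sgn (x k)) := by rw [sgn_not]; ring
    _ = -∏ k, sgn (x k) := by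
        rw [← Finset.prod_eq_mul_prod_sdiff_singleton_of_mem (Finset.mem_univ k0)
          (fun k => sgn (x k))]

lemma sum_cancel {n : ℕ} (k0 : Fin n) (F : (Fin n → Bool) → ℝ)
    (hF : ∀ x, F (flip k0 x) = F x) :
    ∑ x : Fin n → Bool, (∏ k, sgn (x k)) * F x = 0 := by
  set S := ∑ x : Fin n → Bool, (∏ k, sgn (x k)) * F x with hS
  have h2 : ∑ x : Fin n → Bool, (∏ k, sgn (flip k0 x k)) * F (flip k0 x) = S :=
    Fintype.sum_equiv (Function.Involutive.toPerm (flip k0) (flip_invol k0)) _ _ (fun x => rfl)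
  have h3 : ∑ x : Fin n → Bool, (∏ k, sgn (flip k0 x k)) * F (flip k0 x)
      = ∑ x : Fin n → Bool, -((∏ k, sgn (x k)) * F x) := by
    refine Finset.sum_congr rfl fun x _ => ?_
    rw [prod_flip, hF]; ring
  rw [Finset.sum_neg_distrib] at h3
  have := h2.symm.trans h3
  linarith

lemma key {n d : ℕ} (hdn : d < n) (z : Fin n → Bool) :
    ∑ x : Fin n → Bool, (∏ k, sgn (x k)) *
      (∑ k, boolVec z k * boolVec x k) ^ d = 0 := by
  have hpow : ∀ x : Fin n → Bool,
      (∑ k, boolVec z k * boolVec x k) ^ d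
        = ∑ g ∈ Fintype.piFinset (fun _ : Fin d => (Finset.univ : Finset (Fin n))),
            ∏ i : Fin d, boolVec z (g i) * boolVec x (g i) := by
    intro x
    calc (∑ k, boolVec z k * boolVec x k) ^ d
        = ∏ _i : Fin d, ∑ k, boolVec z k * boolVec x k := by
          rw [Finset.prod_const, Finset.card_univ, Fintype.card_fin]
      _ = ∑ g ∈ Fintype.piFinset (fun _ : Fin d => (Finset.univ : Finset (Fin n))),
            ∏ i : Fin d, boolVec z (g i) * boolVec x (g i) :=
          Finset.prod_univ_sum _ _
  calc ∑ x : Fin n → Bool, (∏ k, sgn (x k)) * (∑ k, boolVec z k * boolVec x k) ^ d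
      = ∑ x : Fin n → Bool,
          ∑ g ∈ Fintype.piFinset (fun _ : Fin d => (Finset.univ : Finset (Fin n))),
            (∏ k, sgn (x k)) * ∏ i : Fin d, boolVec z (g i) * boolVec x (g i) := by
        refine Finset.sum_congr rfl fun x _ => ?_
        rw [hpow, Finset.mul_sum]
    _ = ∑ g ∈ Fintype.piFinset (fun _ : Fin d => (Finset.univ : Finset (Fin n))),
          ∑ x : Fin n → Bool,
            (∏ k, sgn (x k)) * ∏ i : Fin d, boolVec z (g i) * boolVec x (g i) :=
        Finset.sum_comm
    _ = 0 := by
        refine Finset.sum_eq_zero fun g _ => ?_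
        -- pick a coordinate not in the range of g
        have hcard : (Finset.univ.image g).card < Fintype.card (Fin n) := by
          have h1 : (Finset.univ.image g).card ≤ d := by
            simpa using Finset.card_image_le (f := g) (s := Finset.univ)
          simpa using lt_of_le_of_lt h1 hdn
        have hex : ∃ k0 : Fin n, k0 ∉ Finset.univ.image g := by
          by_contra hall
          push_neg at hall
          have heq : Finset.univ.image g = Finset.univ :=
            Finset.eq_univ_iff_forall.mpr hall
          rw [heq, Finset.card_univ] at hcard
          exact lt_irrefl _ hcard
        obtain ⟨k0, hk0⟩ := hex
        refine sum_cancel k0 _ fun x => ?_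
        refine Finset.prod_congr rfl fun i _ => ?_
        have hne : g i ≠ k0 := by
          intro h
          exact hk0 (h ▸ Finset.mem_image_of_mem g (Finset.mem_univ i))
        simp [boolVec, flip, Function.update_of_ne hne]

lemma sum_sgn {n : ℕ} (hn : 0 < n) :
    ∑ x : Fin n → Bool, (∏ k, sgn (x k)) = 0 := by
  have := sum_cancel (⟨0, hn⟩ : Fin n) (fun _ => (1 : ℝ)) (fun _ => rfl)
  simpa using this

end AuxParity

open AuxParity in
/-- For every positive integer `d < n` there is a Boolean function
`f : {0,1}^n → {−1,1}` that cannot be realized by a polynomial kernel perceptron of degree `d`: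
for all reals `α_z` (`z ∈ {0,1}^n`) and `b ∈ ℝ` there is `x ∈ {0,1}^n` with
`f(x) ≠ σ( Σ_z α_z f(z) ⟨z,x⟩^d + b )`. -/
theorem exists_boolean_function_not_realized_by_degree_lt_n (n d : ℕ)
    (hd : 0 < d) (hdn : d < n) :
    ∃ f : (Fin n → Bool) → ℝ, (∀ x, f x = 1 ∨ f x = -1) ∧
      ∀ α : (Fin n → Bool) → ℝ, ∀ b : ℝ, ∃ x : Fin n → Bool,
        f x ≠ perceptronSign
          (∑ z : Fin n → Bool, α z * f z * (∑ k, boolVec z k * boolVec x k) ^ d + b) := by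
  have hn : 0 < n := lt_trans hd hdn
  set f : (Fin n → Bool) → ℝ := fun x => ∏ k, sgn (x k) with hf
  refine ⟨f, ?_, ?_⟩
  · intro x
    refine Finset.prod_induction _ (fun r => r = 1 ∨ r = -1) ?_ (Or.inl rfl) ?_
    · rintro a b (ha | ha) (hb | hb) <;> rw [ha, hb] <;> norm_num
    · intro k _
      cases h : x k <;> simp [sgn, h]
  · intro α b
    by_contra hcon
    push_neg at hcon
    set p : (Fin n → Bool) → ℝ := fun x =>
      ∑ z : Fin n → Bool, α z * f z * (∑ k, boolVec z k * boolVec x k) ^ d + b with hp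
    -- Zero: ∑ x, f x * p x = 0
    have hzero : ∑ x : Fin n → Bool, f x * p x = 0 := by
      have expand : ∀ x : Fin n → Bool, f x * p x
          = (∑ z : Fin n → Bool,
              (α z * f z) * (f x * (∑ k, boolVec z k * boolVec x k) ^ d)) + f x * b := by
        intro x
        rw [hp, mul_add, Finset.mul_sum]
        congr 1
        exact Finset.sum_congr rfl fun z _ => by ring
      calc ∑ x : Fin n → Bool, f x * p x
          = (∑ x : Fin n → Bool, ∑ z : Fin n → Bool,
              (α z * f z) * (f x * (∑ k, boolVec z k * boolVec x k) ^ d))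
            + ∑ x : Fin n → Bool, f x * b := by
            rw [← Finset.sum_add_distrib]
            exact Finset.sum_congr rfl fun x _ => expand x
        _ = (∑ z : Fin n → Bool, (α z * f z) *
              ∑ x : Fin n → Bool, f x * (∑ k, boolVec z k * boolVec x k) ^ d)
            + (∑ x : Fin n → Bool, f x) * b := by
            rw [Finset.sum_comm, Finset.sum_mul]
            congr 1
            · exact Finset.sum_congr rfl fun z _ => (Finset.mul_sum _ _ _).symm
        _ = 0 := by
            rw [sum_sgn hn]
            simp only [hf]
            rw [Finset.sum_eq_zero fun z _ => by rw [key hdn z, mul_zero]]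
            ring
    -- Positivity: ∑ x, f x * p x > 0
    have hterm : ∀ x : Fin n → Bool, 0 ≤ f x * p x := by
      intro x
      have hx := hcon x
      by_cases h : 0 ≤ p x
      · rw [perceptronSign, if_pos h] at hx
        rw [hx]; linarith
      · rw [perceptronSign, if_neg h] at hx
        rw [hx]; push_neg at h; nlinarith
    have hx0 : ∃ x : Fin n → Bool, 0 < f x * p x := by
      refine ⟨flip (⟨0, hn⟩ : Fin n) (fun _ => false), ?_⟩
      set x0 := flip (⟨0, hn⟩ : Fin n) (fun _ => false) with hx0def
      have hfx0 : f x0 = -1 := by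
        rw [hf]
        simp only [hx0def]
        rw [prod_flip]
        simp [sgn]
      have hx := hcon x0
      rw [hfx0] at hx
      by_cases h : 0 ≤ p x0
      · rw [perceptronSign, if_pos h] at hx; norm_num at hx
      · push_neg at h; rw [hfx0]; nlinarith
    obtain ⟨x0, hx0pos⟩ := hx0
    have : 0 < ∑ x : Fin n → Bool, f x * p x :=
      Finset.sum_pos' (fun x _ => hterm x) ⟨x0, Finset.mem_univ x0, hx0pos⟩
    linarith
end

section
/- Let m ≥ n ≥ 2. There exists an open and dense subset 𝒜 of ℝ^{n×m} such that for every A = [x_1, …, x_m] ∈ 𝒜 (columns x_j ∈ ℝ^n), every choice of labels y_1, …, y_m ∈ {−1, 1}, and every positive integer d satisfying binom(n + d − 1, d) ≥ m, there exist α_1, …, α_m ∈ ℝ and b ∈ ℝ such that σ( Σ_{i=1}^m α_i y_i ⟨x_i, x_j⟩^d + b ) = y_j for all j = 1, …, m, where σ(t) = 1 for t ≥ 0 and σ(t) = −1 for t < 0. -/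
open Finset Matrix Function Polynomial

namespace PerceptronAux





/-- tensor-power vector of a vector, as a function on words -/
def phi (d n : ℕ) (x : Fin n → ℝ) : (Fin d → Fin n) → ℝ := fun k => ∏ t, x (k t)

/-- generalized contraction -/
lemma sum_prod_eq {n d : ℕ} (w w' : Fin d → (Fin n → ℝ)) :
    ∑ k : Fin d → Fin n, (∏ t, w t (k t)) * (∏ t, w' t (k t))
      = ∏ t, ∑ a, w t a * w' t a := by
  rw [Finset.prod_univ_sum]
  rw [Fintype.piFinset_univ]
  exact Finset.sum_congr rfl fun k _ => (Finset.prod_mul_distrib).symm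

lemma sum_phi_mul_phi {n d : ℕ} (x y : Fin n → ℝ) :
    ∑ k, phi d n x k * phi d n y k = (∑ a, x a * y a) ^ d := by
  have := sum_prod_eq (fun _ : Fin d => x) (fun _ : Fin d => y)
  simpa [phi, Finset.prod_const] using this

/-- Gram matrices of independent families have nonzero determinant. -/
lemma det_gram_ne_zero {ι κ : Type*} [Fintype ι] [Fintype κ] [DecidableEq ι]
    (v : ι → κ → ℝ) (hv : LinearIndependent ℝ v) :
    (Matrix.of fun i j => ∑ k, v i k * v j k).det ≠ 0 := by
  set M : Matrix ι ι ℝ := Matrix.of fun i j => ∑ k, v i k * v j k with hM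
  intro hdet
  obtain ⟨c, hc0, hc⟩ := (Matrix.exists_mulVec_eq_zero_iff).2 hdet
  have key : ∀ k, (∑ i, c i * v i k) = 0 := by
    have h2 : ∑ k, (∑ i, c i * v i k) ^ 2 = 0 := by
      have e1 : ∑ k, (∑ i, c i * v i k) ^ 2 = c ⬝ᵥ (M *ᵥ c) := by
        simp only [dotProduct, Matrix.mulVec, hM, Matrix.of_apply, sq,
          Finset.sum_mul_sum, Finset.mul_sum, Finset.sum_mul]
        rw [Finset.sum_comm]
        refine Finset.sum_congr rfl fun i _ => ?_
        rw [Finset.sum_comm]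
        refine Finset.sum_congr rfl fun j _ => Finset.sum_congr rfl fun k _ => by ring
      rw [e1, hc, dotProduct_zero]
    intro k
    have := (Finset.sum_eq_zero_iff_of_nonneg (fun k _ => sq_nonneg _)).1 h2 k (Finset.mem_univ k)
    exact sq_eq_zero_iff.1 this
  apply hc0
  have : ∑ i, c i • v i = 0 := by
    funext k
    simpa [Finset.sum_apply] using key k
  exact funext (Fintype.linearIndependent_iff.1 hv c this)




/-- standard basis vector -/
def stdb {n : ℕ} (b : Fin n) : Fin n → ℝ := fun c => if c = b then 1 else 0

/-- symmetrized indicator of the word `i` -/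
def Sw (d n : ℕ) (i : Fin d → Fin n) : (Fin d → Fin n) → ℝ :=
  fun k => ∑ g ∈ Finset.univ.filter (fun g : Fin d → Fin d => Function.Bijective g),
    (if k = i ∘ g then (1:ℝ) else 0)

/-- inclusion-exclusion inner sum -/
lemma incl_excl {d : ℕ} (T : Finset (Fin d)) :
    ∑ S ∈ (Finset.univ : Finset (Fin d)).powerset.filter (fun S => T ⊆ S),
        ((-1:ℝ)) ^ (d - S.card)
      = if T = Finset.univ then 1 else 0 := by
  classical
  have hre : ∑ S ∈ (Finset.univ : Finset (Fin d)).powerset.filter (fun S => T ⊆ S),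
        ((-1:ℝ)) ^ (d - S.card) = ∑ R ∈ Tᶜ.powerset, ((-1:ℝ)) ^ R.card := by
    refine Finset.sum_nbij' (fun S => Sᶜ) (fun R => Rᶜ) ?_ ?_ ?_ ?_ ?_
    · intro S hS
      simp only [Finset.mem_filter, Finset.mem_powerset] at hS
      simpa [Finset.mem_powerset] using Finset.compl_subset_compl.2 hS.2
    · intro R hR
      simp only [Finset.mem_powerset] at hR
      simp only [Finset.mem_filter, Finset.mem_powerset]
      exact ⟨Finset.subset_univ _, by simpa using Finset.compl_subset_compl.2 hR⟩
    · intro S _; simp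
    · intro R _; simp
    · intro S hS
      congr 1
      rw [Finset.card_compl]
      simp
  rw [hre]
  have := Finset.sum_powerset_neg_one_pow_card (x := Tᶜ)
  have hcast : ∑ R ∈ Tᶜ.powerset, ((-1:ℝ)) ^ R.card
      = ((∑ R ∈ Tᶜ.powerset, ((-1:ℤ)) ^ R.card : ℤ) : ℝ) := by
    push_cast; rfl
  rw [hcast, this]
  by_cases h : Tᶜ = (∅ : Finset (Fin d))
  · have : T = Finset.univ := by simpa [Finset.compl_eq_empty_iff] using h
    simp [h, this]
  · have : T ≠ Finset.univ := by
      intro hT; exact h (by simp [hT])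
    simp [h, this]

lemma polarization {d n : ℕ} (i : Fin d → Fin n) (k : Fin d → Fin n) :
    ∑ S ∈ (Finset.univ : Finset (Fin d)).powerset,
        ((-1:ℝ)) ^ (d - S.card) * phi d n (fun c => ∑ s ∈ S, stdb (i s) c) k
      = Sw d n i k := by
  classical
  -- expand phi
  have step1 : ∀ S : Finset (Fin d),
      phi d n (fun c => ∑ s ∈ S, stdb (i s) c) k
        = ∑ g : Fin d → Fin d, (if ∀ t, g t ∈ S then ∏ t, stdb (i (g t)) (k t) else 0) := by
    intro S
    have : ∀ t : Fin d, (∑ s ∈ S, stdb (i s) (k t))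
        = ∑ s : Fin d, (if s ∈ S then stdb (i s) (k t) else 0) := by
      intro t
      rw [Finset.sum_ite_mem, Finset.univ_inter]
    unfold phi
    simp only [this]
    rw [Finset.prod_univ_sum]
    rw [Fintype.piFinset_univ]
    refine Finset.sum_congr rfl fun g _ => ?_
    rw [Fintype.prod_ite_zero]
    congr 1
  simp only [step1, Finset.mul_sum]
  rw [Finset.sum_comm]
  have hSw : Sw d n i k = ∑ g : Fin d → Fin d,
      (if Function.Bijective g then (if k = i ∘ g then (1:ℝ) else 0) else 0) := by
    rw [Sw, Finset.sum_filter]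
  rw [hSw]
  refine Finset.sum_congr rfl fun g _ => ?_
  have himg : (Finset.image g Finset.univ = Finset.univ) ↔ Function.Bijective g := by
    constructor
    · intro h
      refine Finite.surjective_iff_bijective.1 fun b => ?_
      have : b ∈ Finset.image g Finset.univ := by rw [h]; exact Finset.mem_univ b
      obtain ⟨a, _, ha⟩ := Finset.mem_image.1 this
      exact ⟨a, ha⟩
    · intro h; exact Finset.image_univ_of_surjective h.surjective
  have hW : (∏ t, stdb (i (g t)) (k t)) = (if k = i ∘ g then (1:ℝ) else 0) := by
    have : ∀ t : Fin d, stdb (i (g t)) (k t) = if k t = i (g t) then (1:ℝ) else 0 := fun t => rfl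
    simp only [this]
    rw [Fintype.prod_ite_zero]
    by_cases h : k = i ∘ g
    · simp [h, funext_iff.1 h]
    · have : ¬ (∀ t, k t = i (g t)) := fun hh => h (funext hh)
      simp [h, this]
  calc ∑ S ∈ (Finset.univ : Finset (Fin d)).powerset,
        ((-1:ℝ)) ^ (d - S.card) * (if ∀ t, g t ∈ S then ∏ t, stdb (i (g t)) (k t) else 0)
      = ∑ S ∈ (Finset.univ : Finset (Fin d)).powerset,
        (if Finset.image g Finset.univ ⊆ S then ((-1:ℝ)) ^ (d - S.card) * ∏ t, stdb (i (g t)) (k t) else 0) := by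
        refine Finset.sum_congr rfl fun S _ => ?_
        rw [mul_ite, mul_zero]
        congr 1
        · simp [Finset.image_subset_iff]
    _ = (∑ S ∈ (Finset.univ : Finset (Fin d)).powerset.filter
          (fun S => Finset.image g Finset.univ ⊆ S), ((-1:ℝ)) ^ (d - S.card))
          * ∏ t, stdb (i (g t)) (k t) := by
        rw [← Finset.sum_filter, Finset.sum_mul]
    _ = (if Function.Bijective g then (if k = i ∘ g then (1:ℝ) else 0) else 0) := by
        rw [incl_excl, hW]
        by_cases hb : Function.Bijective g
        · rw [if_pos (himg.2 hb), if_pos hb, one_mul]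
        · rw [if_neg (fun h => hb (himg.1 h)), if_neg hb, zero_mul]






/-- multiset of letters of a word -/
def ms {d n : ℕ} (i : Fin d → Fin n) : Multiset (Fin n) :=
  Multiset.map i Finset.univ.val

lemma ms_card {d n : ℕ} (i : Fin d → Fin n) : Multiset.card (ms i) = d := by
  simp [ms]

lemma ms_comp_bijective {d n : ℕ} (i : Fin d → Fin n) {g : Fin d → Fin d}
    (hg : Function.Bijective g) : ms (i ∘ g) = ms i := by
  unfold ms
  have : Multiset.map g Finset.univ.val = Finset.univ.val :=
    (Multiset.bijective_iff_map_univ_eq_univ g).1 hg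
  rw [← Multiset.map_map, this]

lemma Sw_eq_zero {d n : ℕ} {i k : Fin d → Fin n} (h : ms k ≠ ms i) : Sw d n i k = 0 := by
  apply Finset.sum_eq_zero
  intro g hg
  rw [if_neg]
  intro hk
  exact h (hk ▸ ms_comp_bijective i (Finset.mem_filter.1 hg).2)

lemma Sw_self_pos {d n : ℕ} (i : Fin d → Fin n) : Sw d n i i ≠ 0 := by
  have h1 : (1:ℝ) ≤ Sw d n i i := by
    have hid : (id : Fin d → Fin d) ∈ Finset.univ.filter
        (fun g : Fin d → Fin d => Function.Bijective g) :=
      Finset.mem_filter.2 ⟨Finset.mem_univ _, Function.bijective_id⟩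
    have h2 := Finset.single_le_sum (f := fun g : Fin d → Fin d => if i = i ∘ g then (1:ℝ) else 0)
      (fun g _ => by positivity) hid
    have : (if i = i ∘ id then (1:ℝ) else 0) = 1 := if_pos rfl
    rw [this] at h2
    exact h2
  linarith

/-- every multiset of size d is the letter-multiset of some word -/
lemma ms_surj {d n : ℕ} (s : Multiset (Fin n)) (hs : Multiset.card s = d) :
    ∃ i : Fin d → Fin n, ms i = s := by
  obtain ⟨l, rfl⟩ : ∃ l : List (Fin n), (l : Multiset (Fin n)) = s := ⟨s.toList, s.coe_toList⟩
  have hl : l.length = d := by simpa using hs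
  refine ⟨fun t => l.get (Fin.cast hl.symm t), ?_⟩
  unfold ms
  have huniv : (Finset.univ.val : Multiset (Fin d)) = ↑(List.finRange d) := by
    rw [Fin.univ_def]
  rw [huniv, Multiset.map_coe]
  congr 1
  apply List.ext_getElem
  · simp [hl]
  · intro j h1 h2
    simp

lemma Sw_mem_span {d n : ℕ} (i : Fin d → Fin n) :
    Sw d n i ∈ Submodule.span ℝ (Set.range (phi d n)) := by
  have heq : Sw d n i = ∑ S ∈ (Finset.univ : Finset (Fin d)).powerset,
      ((-1:ℝ))^(d - S.card) • phi d n (fun c => ∑ s ∈ S, stdb (i s) c) := by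
    funext k
    rw [Finset.sum_apply]
    simp only [Pi.smul_apply, smul_eq_mul]
    exact (polarization i k).symm
  rw [heq]
  exact Submodule.sum_mem _ fun S _ =>
    Submodule.smul_mem _ _ (Submodule.subset_span ⟨_, rfl⟩)

set_option maxHeartbeats 1000000 in
lemma exists_indep_phi {n d m : ℕ} (hm : m ≤ (n + d - 1).choose d) :
    ∃ x : Fin m → (Fin n → ℝ), LinearIndependent ℝ (fun i => phi d n (x i)) := by
  classical
  set W := Submodule.span ℝ (Set.range (phi d n)) with hW
  -- a representative word for each multiset
  have hrep : ∀ s : Sym (Fin n) d, ∃ i : Fin d → Fin n, ms i = s.1 :=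
    fun s => ms_surj s.1 s.2
  choose rep hrepeq using hrep
  -- the symmetrized indicators are linearly independent
  have hfam : LinearIndependent ℝ (fun s : Sym (Fin n) d => Sw d n (rep s)) := by
    rw [Fintype.linearIndependent_iff]
    intro c hc s₀
    have hpt := congrFun hc (rep s₀)
    rw [Finset.sum_apply] at hpt
    simp only [Pi.smul_apply, smul_eq_mul, Pi.zero_apply] at hpt
    have hsingle : ∑ s : Sym (Fin n) d, c s * Sw d n (rep s) (rep s₀)
        = c s₀ * Sw d n (rep s₀) (rep s₀) := by
      refine Finset.sum_eq_single s₀ (fun s _ hs => ?_) (fun h => absurd (Finset.mem_univ _) h)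
      rw [Sw_eq_zero, mul_zero]
      rw [hrepeq, hrepeq]
      intro h
      exact hs (Subtype.ext h.symm)
    rw [hsingle] at hpt
    rcases mul_eq_zero.1 hpt with h | h
    · exact h
    · exact absurd h (Sw_self_pos _)
  -- cardinality
  have hcard : m ≤ Fintype.card (Sym (Fin n) d) := by
    rw [Sym.card_sym_eq_choose, Fintype.card_fin]
    exact hm
  -- m ≤ finrank W
  have hmemW : ∀ s : Sym (Fin n) d, Sw d n (rep s) ∈ W := fun s => Sw_mem_span _
  have hfam' : LinearIndependent ℝ (fun s : Sym (Fin n) d => (⟨Sw d n (rep s), hmemW s⟩ : W)) := by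
    apply LinearIndependent.of_comp W.subtype
    exact hfam
  have hrank : m ≤ Module.finrank ℝ W :=
    le_trans hcard hfam'.fintype_card_le_finrank
  -- select an independent subfamily of the phi's
  obtain ⟨b, hbsub, hbspan, hbind⟩ := exists_linearIndependent ℝ (Set.range (phi d n))
  have hbfin : b.Finite := hbind.setFinite
  haveI : Fintype b := hbfin.fintype
  have hfr : Module.finrank ℝ W = b.toFinset.card := by
    rw [hW, ← hbspan]
    exact finrank_span_set_eq_card hbind
  have hmcard : m ≤ b.toFinset.card := by rw [← hfr]; exact hrank
  obtain ⟨t, hts, htcard⟩ := Finset.exists_subset_card_eq hmcard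
  have htm : t.card = m := htcard
  let e : Fin m → (Fin d → Fin n) → ℝ := fun j => (t.equivFin.symm (Fin.cast htm.symm j)).1
  have hmemb : ∀ j, e j ∈ b := by
    intro j
    have := (t.equivFin.symm (Fin.cast htm.symm j)).2
    exact Set.mem_toFinset.1 (hts this)
  have hrange : ∀ j, ∃ x, phi d n x = e j := fun j => hbsub (hmemb j)
  choose x hx using hrange
  refine ⟨x, ?_⟩
  have hne : (fun j => phi d n (x j)) = fun j => e j := funext fun j => hx j
  rw [hne]
  have hinj : Function.Injective (fun j : Fin m => (⟨e j, hmemb j⟩ : b)) := by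
    intro j j' h
    have h0 : e j = e j' := congrArg (fun z : b => (z : (Fin d → Fin n) → ℝ)) h
    have h1 : (t.equivFin.symm (Fin.cast htm.symm j)) = (t.equivFin.symm (Fin.cast htm.symm j')) :=
      Subtype.ext h0
    have h2 := t.equivFin.symm.injective h1
    exact Fin.cast_injective _ h2
  exact hbind.comp _ hinj

/-- witness matrices for the small-degree determinant conditions -/
lemma exists_witness {n m : ℕ} (d : ℕ) (hm : m ≤ (n + d - 1).choose d) :
    ∃ B : Matrix (Fin n) (Fin m) ℝ,
      (Matrix.of fun i j => (∑ k, B k i * B k j) ^ d).det ≠ 0 := by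
  obtain ⟨x, hx⟩ := exists_indep_phi (d := d) hm
  refine ⟨Matrix.of fun k i => x i k, ?_⟩
  have hdet := det_gram_ne_zero _ hx
  have hM : (Matrix.of fun i j : Fin m => (∑ k, (Matrix.of fun k i => x i k) k i
        * (Matrix.of fun k i => x i k) k j) ^ d)
      = Matrix.of fun i j => ∑ k, phi d n (x i) k * phi d n (x j) k := by
    ext i j
    simp only [Matrix.of_apply]
    rw [sum_phi_mul_phi]
  rw [hM]
  exact hdet





lemma sum_sq_pos_of_ne_zero {n : ℕ} {x : Fin n → ℝ} (hx : x ≠ 0) :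
    0 < ∑ a, x a * x a := by
  have ⟨a₀, ha₀⟩ : ∃ a, x a ≠ 0 := by
    by_contra h
    push_neg at h
    exact hx (funext h)
  exact Finset.sum_pos' (fun a _ => mul_self_nonneg _)
    ⟨a₀, Finset.mem_univ _, mul_self_pos.2 ha₀⟩

/-- avoiding finitely many hyperplanes -/
lemma exists_avoid {n : ℕ} {ι : Type*} [DecidableEq ι] (s : Finset ι) (w : ι → (Fin n → ℝ)) :
    (∀ j ∈ s, w j ≠ 0) → ∃ u : Fin n → ℝ, ∀ j ∈ s, (∑ a, w j a * u a) ≠ 0 := by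
  classical
  induction s using Finset.induction_on with
  | empty => exact fun _ => ⟨0, fun j hj => absurd hj (Finset.notMem_empty j)⟩
  | @insert j s hjs ih =>
    intro hw
    obtain ⟨u, hu⟩ := ih (fun j' hj' => hw j' (Finset.mem_insert_of_mem hj'))
    have hwj : (∑ a, w j a * w j a) ≠ 0 :=
      ne_of_gt (sum_sq_pos_of_ne_zero (hw j (Finset.mem_insert_self j s)))
    set bad : Finset ℝ :=
      insert 0 ((insert j s).image fun j' =>
        -(∑ a, w j' a * u a) / (∑ a, w j' a * w j a)) with hbad
    obtain ⟨t, ht⟩ := Infinite.exists_notMem_finset bad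
    refine ⟨fun a => u a + t * w j a, ?_⟩
    intro j' hj'
    have hexp : (∑ a, w j' a * (u a + t * w j a))
        = (∑ a, w j' a * u a) + t * (∑ a, w j' a * w j a) := by
      rw [Finset.mul_sum]
      rw [← Finset.sum_add_distrib]
      exact Finset.sum_congr rfl fun a _ => by ring
    rw [hexp]
    by_cases hC : (∑ a, w j' a * w j a) = 0
    · rcases Finset.mem_insert.1 hj' with rfl | hj's
      · exact absurd hC hwj
      · rw [hC, mul_zero, add_zero]
        exact hu _ hj's
    · intro h0
      apply ht
      have htt : t = -(∑ a, w j' a * u a) / (∑ a, w j' a * w j a) := by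
        field_simp
        linarith
      rw [hbad, htt]
      exact Finset.mem_insert_of_mem (Finset.mem_image_of_mem _ hj')

lemma card_filter_lt (d r : ℕ) (h : r ≤ d) :
    (Finset.univ.filter (fun t : Fin d => (t : ℕ) < r)).card = r := by
  apply Finset.card_eq_of_bijective (fun i hi => (⟨i, lt_of_lt_of_le hi h⟩ : Fin d))
  · intro t htmem
    have := (Finset.mem_filter.1 htmem).2
    exact ⟨(t : ℕ), this, rfl⟩
  · intro i hi
    simp [hi]
  · intro i j hi hj hij
    exact congrArg Fin.val hij

lemma prod_ite_pow {d r : ℕ} (h : r ≤ d) (bb aa : ℝ) :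
    (∏ t : Fin d, (if (t : ℕ) < r then bb else aa)) = bb ^ r * aa ^ (d - r) := by
  rw [Finset.prod_ite]
  rw [Finset.prod_const, Finset.prod_const]
  rw [card_filter_lt d r h]
  congr 2
  have h1 := Finset.card_filter_add_card_filter_not
    (s := (Finset.univ : Finset (Fin d))) (p := fun t : Fin d => (t : ℕ) < r)
  rw [card_filter_lt d r h] at h1
  simp only [Finset.card_univ, Fintype.card_fin] at h1
  omega

/-- Tensor powers of pairwise-independent vectors are independent for large degree. -/
lemma indep_phi_of_pairs {n m d : ℕ} (hm : 2 ≤ m) (hd : m - 1 ≤ d)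
    (x : Fin m → (Fin n → ℝ))
    (hpair : ∀ i j : Fin m, i ≠ j →
      (∑ a, x i a * x i a) * (∑ a, x j a * x j a) - (∑ a, x i a * x j a)^2 ≠ 0) :
    LinearIndependent ℝ (fun i => phi d n (x i)) := by
  classical
  -- columns are nonzero
  have hx0 : ∀ i, x i ≠ 0 := by
    intro i hxi
    obtain ⟨j, hj⟩ : ∃ j : Fin m, j ≠ i := by
      by_cases h : i = ⟨0, by omega⟩
      · exact ⟨⟨1, by omega⟩, by rw [h]; intro hh; exact absurd (congrArg Fin.val hh) (by simp)⟩
      · exact ⟨⟨0, by omega⟩, fun hh => h hh.symm⟩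
    exact hpair i j (fun h => hj h.symm) (by simp [hxi])
  -- choose u
  obtain ⟨u, hu⟩ := exists_avoid Finset.univ x (fun j _ => hx0 j)
  set a : Fin m → ℝ := fun i => ∑ c, x i c * u c with ha
  have hau : ∀ i, a i ≠ 0 := fun i => hu i (Finset.mem_univ i)
  -- choose v
  set wp : Fin m × Fin m → (Fin n → ℝ) :=
    fun p => fun c => a p.1 * x p.2 c - a p.2 * x p.1 c with hwp
  have hwpne : ∀ p ∈ (Finset.univ : Finset (Fin m)).offDiag, wp p ≠ 0 := by
    intro p hp hzero
    have hne : p.1 ≠ p.2 := (Finset.mem_offDiag.1 hp).2.2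
    have hxj : ∀ c, x p.2 c = (a p.2 / a p.1) * x p.1 c := by
      intro c
      have h1 := congrFun hzero c
      simp only [hwp, Pi.zero_apply] at h1
      rw [div_mul_eq_mul_div, eq_div_iff (hau p.1)]
      linarith
    apply hpair p.1 p.2 hne
    have h1 : ∑ c, x p.2 c * x p.2 c = (a p.2 / a p.1)^2 * ∑ c, x p.1 c * x p.1 c := by
      rw [Finset.mul_sum]
      exact Finset.sum_congr rfl fun c _ => by rw [hxj c]; ring
    have h2 : ∑ c, x p.1 c * x p.2 c = (a p.2 / a p.1) * ∑ c, x p.1 c * x p.1 c := by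
      rw [Finset.mul_sum]
      exact Finset.sum_congr rfl fun c _ => by rw [hxj c]; ring
    rw [h1, h2]
    ring
  obtain ⟨v, hv⟩ := exists_avoid _ wp hwpne
  set b : Fin m → ℝ := fun i => ∑ c, x i c * v c with hb
  have hab : ∀ i j : Fin m, i ≠ j → a i * b j - a j * b i ≠ 0 := by
    intro i j hij
    have hmem : ((i, j) : Fin m × Fin m) ∈ (Finset.univ : Finset (Fin m)).offDiag :=
      Finset.mem_offDiag.2 ⟨Finset.mem_univ _, Finset.mem_univ _, hij⟩
    have hvv := hv (i, j) hmem
    have hexp : (∑ c, wp (i, j) c * v c) = a i * b j - a j * b i := by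
      simp only [hwp, hb]
      rw [Finset.mul_sum, Finset.mul_sum, ← Finset.sum_sub_distrib]
      exact Finset.sum_congr rfl fun c _ => by ring
    rwa [hexp] at hvv
  -- the slopes are injective
  set sl : Fin m → ℝ := fun i => b i / a i with hsl
  have hba : ∀ i, b i = sl i * a i := by
    intro i
    exact (div_mul_cancel₀ (b i) (hau i)).symm
  have hslinj : Function.Injective sl := by
    intro i j hij
    by_contra hne
    apply hab i j hne
    have h1 : b i * a j = b j * a i := by
      rw [hsl] at hij
      simp only [] at hij
      exact (div_eq_div_iff (hau i) (hau j)).1 hij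
    linear_combination -h1
  -- main computation
  rw [Fintype.linearIndependent_iff]
  intro c hc
  have key : ∀ r : Fin m, ∑ i, (c i * a i ^ d) * sl i ^ (r : ℕ) = 0 := by
    intro r
    have hrd : (r : ℕ) ≤ d := le_trans (by omega) hd
    set wf : Fin d → (Fin n → ℝ) := fun t => if (t : ℕ) < (r : ℕ) then v else u with hwf
    have h0 : ∑ k : Fin d → Fin n, (∑ i, c i * phi d n (x i) k) * (∏ t, wf t (k t)) = 0 := by
      apply Finset.sum_eq_zero
      intro k _
      have hck := congrFun hc k
      simp only [Finset.sum_apply, Pi.smul_apply, smul_eq_mul, Pi.zero_apply] at hck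
      rw [hck, zero_mul]
    have h1 : ∑ k : Fin d → Fin n, (∑ i, c i * phi d n (x i) k) * (∏ t, wf t (k t))
        = ∑ i, c i * (b i ^ (r : ℕ) * a i ^ (d - (r : ℕ))) := by
      simp only [Finset.sum_mul]
      rw [Finset.sum_comm]
      refine Finset.sum_congr rfl fun i _ => ?_
      have hstep : ∑ k : Fin d → Fin n, c i * phi d n (x i) k * (∏ t, wf t (k t))
          = c i * ∑ k : Fin d → Fin n, (∏ t, x i (k t)) * (∏ t, wf t (k t)) := by
        rw [Finset.mul_sum]
        exact Finset.sum_congr rfl fun k _ => by rw [phi]; ring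
      rw [hstep]
      rw [sum_prod_eq (fun _ => x i) wf]
      congr 1
      have hterm : ∀ t : Fin d, (∑ a', x i a' * wf t a')
          = if (t : ℕ) < (r : ℕ) then b i else a i := by
        intro t
        by_cases hcase : (t : ℕ) < (r : ℕ)
        · rw [if_pos hcase]
          have hwt : wf t = v := if_pos hcase
          rw [hwt]
        · rw [if_neg hcase]
          have hwt : wf t = u := if_neg hcase
          rw [hwt]
      rw [Finset.prod_congr rfl (fun t _ => hterm t)]
      exact prod_ite_pow hrd _ _
    have h2 := h1 ▸ h0
    rw [← h2]
    refine Finset.sum_congr rfl fun i _ => ?_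
    rw [hba i, mul_pow,
      show a i ^ d = a i ^ ((r:ℕ) + (d - (r:ℕ))) from by congr 1; omega, pow_add]
    ring
  -- Vandermonde
  set γ : Fin m → ℝ := fun i => c i * a i ^ d with hγ
  have hvec : (Matrix.vandermonde sl)ᵀ *ᵥ γ = 0 := by
    funext r
    have := key r
    simp only [Matrix.mulVec, dotProduct, Matrix.transpose_apply,
      Matrix.vandermonde_apply, Pi.zero_apply, hγ]
    rw [← this]
    exact Finset.sum_congr rfl fun i _ => by ring
  have hdet : ((Matrix.vandermonde sl)ᵀ).det ≠ 0 := by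
    rw [Matrix.det_transpose]
    exact Matrix.det_vandermonde_ne_zero_iff.2 hslinj
  have hγ0 : γ = 0 := Matrix.eq_zero_of_mulVec_eq_zero hdet hvec
  intro i
  have := congrFun hγ0 i
  simp only [hγ, Pi.zero_apply] at this
  rcases mul_eq_zero.1 this with h | h
  · exact h
  · exact absurd h (pow_ne_zero _ (hau i))




def gramPow (R : Type*) [CommRing R] (d : ℕ) (A : Matrix (Fin n) (Fin m) R) :
    Matrix (Fin m) (Fin m) R :=
  Matrix.of fun i j => (∑ k, A k i * A k j) ^ d

def fd (R : Type*) [CommRing R] (d : ℕ) (A : Matrix (Fin n) (Fin m) R) : R :=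
  (gramPow R d A).det

def pg (R : Type*) [CommRing R] (A : Matrix (Fin n) (Fin m) R) (i j : Fin m) : R :=
  (∑ k, A k i * A k i) * (∑ k, A k j * A k j) - (∑ k, A k i * A k j) ^ 2

def pairF (R : Type*) [CommRing R] (A : Matrix (Fin n) (Fin m) R) : R :=
  ∏ p ∈ (Finset.univ : Finset (Fin m)).offDiag, pg R A p.1 p.2

lemma gramPow_map {R S : Type*} [CommRing R] [CommRing S] (f : R →+* S) (d : ℕ)
    (A : Matrix (Fin n) (Fin m) R) :
    gramPow S d (A.map f) = (gramPow R d A).map f := by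
  ext i j
  simp [gramPow, Matrix.map_apply, map_pow, map_sum, _root_.map_mul]

lemma fd_map {R S : Type*} [CommRing R] [CommRing S] (f : R →+* S) (d : ℕ)
    (A : Matrix (Fin n) (Fin m) R) :
    fd S d (A.map f) = f (fd R d A) := by
  rw [fd, gramPow_map, fd]
  exact (RingHom.map_det f _).symm

lemma pairF_map {R S : Type*} [CommRing R] [CommRing S] (f : R →+* S)
    (A : Matrix (Fin n) (Fin m) R) :
    pairF S (A.map f) = f (pairF R A) := by
  rw [pairF, pairF, map_prod]
  refine Finset.prod_congr rfl fun p _ => ?_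
  simp [pg, Matrix.map_apply, map_sub, _root_.map_mul, map_pow, map_sum]

lemma fd_smul (d : ℕ) (c : ℝ) (A : Matrix (Fin n) (Fin m) ℝ) :
    fd ℝ d (c • A) = c ^ (2 * d * m) * fd ℝ d A := by
  have h : gramPow ℝ d (c • A) = (c ^ (2 * d)) • gramPow ℝ d A := by
    ext i j
    simp only [gramPow, Matrix.of_apply, Matrix.smul_apply, smul_eq_mul]
    have hsum : ∑ x : Fin n, c * A x i * (c * A x j) = c ^ 2 * ∑ k, A k i * A k j := by
      rw [Finset.mul_sum]
      exact Finset.sum_congr rfl fun k _ => by ring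
    rw [hsum, mul_pow, ← pow_mul]
  rw [fd, h, Matrix.det_smul, fd, Fintype.card_fin, ← pow_mul]

lemma pairF_smul (c : ℝ) (A : Matrix (Fin n) (Fin m) ℝ) :
    pairF ℝ (c • A) = c ^ (4 * (Finset.univ : Finset (Fin m)).offDiag.card) * pairF ℝ A := by
  have h : ∀ p : Fin m × Fin m, pg ℝ (c • A) p.1 p.2 = c ^ 4 * pg ℝ A p.1 p.2 := by
    intro p
    simp only [pg]
    have h1 : ∀ i j : Fin m, ∑ k, (c • A) k i * (c • A) k j = c ^ 2 * ∑ k, A k i * A k j := by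
      intro i j
      rw [Finset.mul_sum]
      exact Finset.sum_congr rfl fun k _ => by
        simp only [Matrix.smul_apply, smul_eq_mul]; ring
    rw [h1, h1, h1]
    ring
  rw [pairF, Finset.prod_congr rfl fun p _ => h p, Finset.prod_mul_distrib,
    Finset.prod_const, pairF, ← pow_mul]

lemma continuous_entry (k : Fin n) (i : Fin m) :
    Continuous fun A : Matrix (Fin n) (Fin m) ℝ => A k i := by
  fun_prop

lemma continuous_fd (d : ℕ) : Continuous fun A : Matrix (Fin n) (Fin m) ℝ => fd ℝ d A := by
  apply Continuous.matrix_det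
  apply continuous_matrix
  intro i j
  exact (continuous_finset_sum _ fun k _ =>
    (continuous_entry k i).mul (continuous_entry k j)).pow d

lemma continuous_pairF : Continuous fun A : Matrix (Fin n) (Fin m) ℝ => pairF ℝ A := by
  apply continuous_finset_prod
  intro p _
  apply Continuous.sub
  · exact (continuous_finset_sum _ fun k _ =>
      (continuous_entry k p.1).mul (continuous_entry k p.1)).mul
      (continuous_finset_sum _ fun k _ =>
      (continuous_entry k p.2).mul (continuous_entry k p.2))
  · exact (continuous_finset_sum _ fun k _ =>
      (continuous_entry k p.1).mul (continuous_entry k p.2)).pow 2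

/-- the master density lemma -/
lemma dense_ne_zero (F : Matrix (Fin n) (Fin m) ℝ → ℝ) (hF : Continuous F) (e : ℕ)
    (hhom : ∀ (c : ℝ) (A : Matrix (Fin n) (Fin m) ℝ), F (c • A) = c ^ e * F A)
    (B : Matrix (Fin n) (Fin m) ℝ) (hB : F B ≠ 0)
    (hline : ∀ A : Matrix (Fin n) (Fin m) ℝ, ∃ p : Polynomial ℝ,
      ∀ t : ℝ, p.eval t = F (A + t • B)) :
    Dense {A : Matrix (Fin n) (Fin m) ℝ | F A ≠ 0} := by
  intro A
  obtain ⟨p, hp⟩ := hline A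
  -- p is not the zero polynomial
  have hcont : Continuous fun s : ℝ => F (s • A + B) := by
    apply hF.comp
    fun_prop
  have hne0 : (fun s : ℝ => F (s • A + B)) 0 ≠ 0 := by
    simpa using hB
  have hev : ∀ᶠ s in nhds (0:ℝ), F (s • A + B) ≠ 0 :=
    hcont.continuousAt.eventually_ne hne0
  have hev' : ∀ᶠ s in nhdsWithin (0:ℝ) {0}ᶜ, F (s • A + B) ≠ 0 ∧ s ≠ 0 :=
    (hev.filter_mono nhdsWithin_le_nhds).and (eventually_mem_nhdsWithin.mono fun s hs => hs)
  obtain ⟨s0, hs0F, hs0⟩ := hev'.exists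
  have hp0 : p ≠ 0 := by
    intro hzero
    have h1 : p.eval s0⁻¹ = F (A + s0⁻¹ • B) := hp s0⁻¹
    have h2 : A + s0⁻¹ • B = s0⁻¹ • (s0 • A + B) := by
      rw [smul_add, smul_smul, inv_mul_cancel₀ hs0, one_smul]
    rw [h2, hhom] at h1
    have : p.eval s0⁻¹ ≠ 0 := by
      rw [h1]
      exact mul_ne_zero (pow_ne_zero _ (inv_ne_zero hs0)) hs0F
    rw [hzero] at this
    simp at this
  -- roots are finite, complement dense
  have hroots : Set.Finite {t : ℝ | p.IsRoot t} := p.finite_setOf_isRoot hp0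
  have hdense : Dense {t : ℝ | p.IsRoot t}ᶜ := hroots.countable.dense_compl ℝ
  -- conclude
  have hg : Continuous fun t : ℝ => A + t • B := by fun_prop
  have himg : (fun t : ℝ => A + t • B) '' {t : ℝ | p.IsRoot t}ᶜ
      ⊆ {A : Matrix (Fin n) (Fin m) ℝ | F A ≠ 0} := by
    rintro _ ⟨t, ht, rfl⟩
    have : p.eval t ≠ 0 := ht
    rw [hp t] at this
    exact this
  have h0cl : (0:ℝ) ∈ closure {t : ℝ | p.IsRoot t}ᶜ := hdense 0
  have hmem : A ∈ closure ((fun t : ℝ => A + t • B) '' {t : ℝ | p.IsRoot t}ᶜ) := by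
    have hsub := image_closure_subset_closure_image (s := {t : ℝ | p.IsRoot t}ᶜ) hg
    have hin := hsub ⟨0, h0cl, rfl⟩
    simpa using hin
  exact closure_mono himg hmem

lemma fd_line (d : ℕ) (A B : Matrix (Fin n) (Fin m) ℝ) :
    ∃ p : Polynomial ℝ, ∀ t : ℝ, p.eval t = fd ℝ d (A + t • B) := by
  refine ⟨fd (Polynomial ℝ) d
    (Matrix.of fun k i => Polynomial.C (A k i) + Polynomial.X * Polynomial.C (B k i)), ?_⟩
  intro t
  have hmap := fd_map (Polynomial.evalRingHom t) d
    (Matrix.of fun k i => Polynomial.C (A k i) + Polynomial.X * Polynomial.C (B k i))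
  have hMeq : (Matrix.of fun k i =>
      Polynomial.C (A k i) + Polynomial.X * Polynomial.C (B k i)).map
        (Polynomial.evalRingHom t) = A + t • B := by
    ext k i
    simp only [Matrix.map_apply, Matrix.of_apply, Matrix.add_apply, Matrix.smul_apply,
      smul_eq_mul, Polynomial.coe_evalRingHom, Polynomial.eval_add, Polynomial.eval_mul,
      Polynomial.eval_C, Polynomial.eval_X]
  rw [hMeq] at hmap
  exact hmap.symm

lemma pairF_line (A B : Matrix (Fin n) (Fin m) ℝ) :
    ∃ p : Polynomial ℝ, ∀ t : ℝ, p.eval t = pairF ℝ (A + t • B) := by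
  refine ⟨pairF (Polynomial ℝ)
    (Matrix.of fun k i => Polynomial.C (A k i) + Polynomial.X * Polynomial.C (B k i)), ?_⟩
  intro t
  have hmap := pairF_map (Polynomial.evalRingHom t)
    (Matrix.of fun k i => Polynomial.C (A k i) + Polynomial.X * Polynomial.C (B k i))
  have hMeq : (Matrix.of fun k i =>
      Polynomial.C (A k i) + Polynomial.X * Polynomial.C (B k i)).map
        (Polynomial.evalRingHom t) = A + t • B := by
    ext k i
    simp only [Matrix.map_apply, Matrix.of_apply, Matrix.add_apply, Matrix.smul_apply,
      smul_eq_mul, Polynomial.coe_evalRingHom, Polynomial.eval_add, Polynomial.eval_mul,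
      Polynomial.eval_C, Polynomial.eval_X]
  rw [hMeq] at hmap
  exact hmap.symm

lemma exists_pair_witness {n m : ℕ} (hn : 2 ≤ n) :
    ∃ B : Matrix (Fin n) (Fin m) ℝ, pairF ℝ B ≠ 0 := by
  classical
  set k0 : Fin n := ⟨0, by omega⟩ with hk0
  set k1 : Fin n := ⟨1, by omega⟩ with hk1
  set B : Matrix (Fin n) (Fin m) ℝ :=
    Matrix.of fun k i => if k = k0 then 1 else if k = k1 then ((i : ℕ) : ℝ) else 0 with hB
  have hk01 : k0 ≠ k1 := by
    intro h
    have := congrArg Fin.val h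
    simp [hk0, hk1] at this
  have hdot : ∀ i j : Fin m, ∑ k, B k i * B k j = 1 + ((i : ℕ) : ℝ) * ((j : ℕ) : ℝ) := by
    intro i j
    have hpt : ∀ k : Fin n, B k i * B k j
        = (if k = k0 then (1:ℝ) else 0) + (if k = k1 then ((i:ℕ):ℝ) * ((j:ℕ):ℝ) else 0) := by
      intro k
      simp only [hB, Matrix.of_apply]
      by_cases h0 : k = k0
      · rw [if_pos h0, if_pos h0, if_pos h0, if_neg (h0 ▸ hk01 : ¬ k = k1)]
        norm_num
      · rw [if_neg h0, if_neg h0, if_neg h0]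
        by_cases h1 : k = k1
        · rw [if_pos h1, if_pos h1, if_pos h1]
          ring
        · rw [if_neg h1, if_neg h1, if_neg h1]
          ring
    rw [Finset.sum_congr rfl fun k _ => hpt k, Finset.sum_add_distrib,
      Finset.sum_ite_eq' Finset.univ k0 (fun _ => (1:ℝ)),
      Finset.sum_ite_eq' Finset.univ k1 (fun _ => ((i:ℕ):ℝ) * ((j:ℕ):ℝ))]
    simp
  refine ⟨B, ?_⟩
  rw [pairF]
  rw [Finset.prod_ne_zero_iff]
  intro p hp
  have hne : p.1 ≠ p.2 := (Finset.mem_offDiag.1 hp).2.2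
  have hcast : ((p.1 : ℕ) : ℝ) ≠ ((p.2 : ℕ) : ℝ) := by
    intro h
    exact hne (Fin.ext (Nat.cast_injective h))
  rw [pg, hdot, hdot, hdot]
  have hfact : (1 + ((p.1:ℕ):ℝ) * ((p.1:ℕ):ℝ)) * (1 + ((p.2:ℕ):ℝ) * ((p.2:ℕ):ℝ))
      - (1 + ((p.1:ℕ):ℝ) * ((p.2:ℕ):ℝ))^2 = (((p.1:ℕ):ℝ) - ((p.2:ℕ):ℝ))^2 := by ring
  rw [hfact]
  exact pow_ne_zero _ (sub_ne_zero.2 hcast)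

lemma isOpen_ne_zero {n m : ℕ} (F : Matrix (Fin n) (Fin m) ℝ → ℝ) (hF : Continuous F) :
    IsOpen {A : Matrix (Fin n) (Fin m) ℝ | F A ≠ 0} :=
  isOpen_compl_singleton.preimage hF

lemma dense_inter_finite {X ι : Type*} [TopologicalSpace X] [Fintype ι] (S : ι → Set X)
    (ho : ∀ i, IsOpen (S i)) (hd : ∀ i, Dense (S i)) : Dense (⋂ i, S i) := by
  classical
  have key : ∀ s : Finset ι, Dense (⋂ i ∈ s, S i) := by
    intro s
    induction s using Finset.induction_on with
    | empty => simpa using dense_univ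
    | @insert a s ha ih =>
      rw [Finset.set_biInter_insert]
      exact (hd a).inter_of_isOpen_left ih (ho a)
  have h := key Finset.univ
  simpa using h

end PerceptronAux

/-- Let `m ≥ n ≥ 2`. There exists an open and dense subset `𝒜` of `ℝ^{n×m}` such
that for every `A = [x₁, …, x_m] ∈ 𝒜` (columns `x_j ∈ ℝ^n`), every choice of labels
`y_j ∈ {−1,1}` and every positive integer `d` with `binom(n+d−1, d) ≥ m`, there exist
`α ∈ ℝ^m` and `b ∈ ℝ` with `σ( Σ_i α_i y_i ⟨x_i,x_j⟩^d + b ) = y_j` for all `j`. -/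
theorem generic_shattering_by_polynomial_kernel_perceptrons (n m : ℕ)
    (hn : 2 ≤ n) (hnm : n ≤ m) :
    ∃ 𝒜 : Set (Matrix (Fin n) (Fin m) ℝ), IsOpen 𝒜 ∧ Dense 𝒜 ∧
      ∀ A ∈ 𝒜, ∀ y : Fin m → ℝ, (∀ j, y j = 1 ∨ y j = -1) →
        ∀ d : ℕ, 0 < d → m ≤ Nat.choose (n + d - 1) d →
          ∃ α : Fin m → ℝ, ∃ b : ℝ, ∀ j : Fin m,
            perceptronSign (∑ i, α i * y i * (∑ k, A k i * A k j) ^ d + b) = y j := by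
  classical
  open PerceptronAux in
  have hm2 : 2 ≤ m := le_trans hn hnm
  set cond : ℕ → Prop := fun d => 0 < d ∧ m ≤ (n + d - 1).choose d with hcond
  set S0 : Set (Matrix (Fin n) (Fin m) ℝ) := {A | PerceptronAux.pairF ℝ A ≠ 0} with hS0
  set SD : Fin m → Set (Matrix (Fin n) (Fin m) ℝ) :=
    fun d => {A | cond d.val → PerceptronAux.fd ℝ d.val A ≠ 0} with hSD
  have hSDeq1 : ∀ d : Fin m, cond d.val → SD d = {A | PerceptronAux.fd ℝ d.val A ≠ 0} := by
    intro d h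
    ext A
    constructor
    · intro hh
      exact hh h
    · intro hh _
      exact hh
  have hSDeq2 : ∀ d : Fin m, ¬ cond d.val → SD d = Set.univ := by
    intro d h
    apply Set.eq_univ_of_forall
    intro A hc
    exact absurd hc h
  have hSDopen : ∀ d : Fin m, IsOpen (SD d) := by
    intro d
    by_cases h : cond d.val
    · rw [hSDeq1 d h]
      exact PerceptronAux.isOpen_ne_zero _ (PerceptronAux.continuous_fd _)
    · rw [hSDeq2 d h]
      exact isOpen_univ
  have hSDdense : ∀ d : Fin m, Dense (SD d) := by
    intro d
    by_cases h : cond d.val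
    · rw [hSDeq1 d h]
      obtain ⟨B, hB⟩ := PerceptronAux.exists_witness (n := n) (m := m) d.val h.2
      exact PerceptronAux.dense_ne_zero _ (PerceptronAux.continuous_fd _) _
        (PerceptronAux.fd_smul d.val) B hB (fun A' => PerceptronAux.fd_line d.val A' B)
    · rw [hSDeq2 d h]
      exact dense_univ
  have hS0open : IsOpen S0 := PerceptronAux.isOpen_ne_zero _ PerceptronAux.continuous_pairF
  have hS0dense : Dense S0 := by
    obtain ⟨B, hB⟩ := PerceptronAux.exists_pair_witness (n := n) (m := m) hn
    exact PerceptronAux.dense_ne_zero _ PerceptronAux.continuous_pairF _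
      PerceptronAux.pairF_smul B hB (fun A' => PerceptronAux.pairF_line A' B)
  refine ⟨S0 ∩ ⋂ d : Fin m, SD d, ?_, ?_, ?_⟩
  · exact hS0open.inter (isOpen_iInter_of_finite hSDopen)
  · exact hS0dense.inter_of_isOpen_left
      (PerceptronAux.dense_inter_finite SD hSDopen hSDdense) hS0open
  · rintro A ⟨hA0, hAD⟩ y hy d hd hbinom
    -- the Gram matrix is invertible
    have hdet : (PerceptronAux.gramPow ℝ d A).det ≠ 0 := by
      by_cases hdm : d < m
      · have hmem := Set.mem_iInter.1 hAD ⟨d, hdm⟩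
        exact hmem ⟨hd, hbinom⟩
      · push_neg at hdm
        set x : Fin m → (Fin n → ℝ) := fun i k => A k i with hx
        have hpairs : ∀ i j : Fin m, i ≠ j →
            (∑ a, x i a * x i a) * (∑ a, x j a * x j a) - (∑ a, x i a * x j a)^2 ≠ 0 := by
          intro i j hij
          have hmem : ((i, j) : Fin m × Fin m) ∈ (Finset.univ : Finset (Fin m)).offDiag :=
            Finset.mem_offDiag.2 ⟨Finset.mem_univ _, Finset.mem_univ _, hij⟩
          exact Finset.prod_ne_zero_iff.1 hA0 (i, j) hmem
        have hind := PerceptronAux.indep_phi_of_pairs (d := d) hm2 (by omega) x hpairs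
        have hg := PerceptronAux.det_gram_ne_zero _ hind
        have hconv : PerceptronAux.gramPow ℝ d A
            = Matrix.of fun i j => ∑ k, PerceptronAux.phi d n (x i) k
                * PerceptronAux.phi d n (x j) k := by
          ext i j
          show (∑ k, A k i * A k j) ^ d
            = ∑ k, PerceptronAux.phi d n (x i) k * PerceptronAux.phi d n (x j) k
          exact (PerceptronAux.sum_phi_mul_phi (x i) (x j)).symm
        rw [hconv]
        exact hg
    set M := PerceptronAux.gramPow ℝ d A with hM
    set β := Matrix.vecMul y M⁻¹ with hβ
    refine ⟨fun i => β i * y i, 0, ?_⟩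
    intro j
    have h1 : Matrix.vecMul β M = y := by
      rw [hβ, Matrix.vecMul_vecMul, Matrix.nonsing_inv_mul M (isUnit_iff_ne_zero.2 hdet),
        Matrix.vecMul_one]
    have hsolve : ∑ i, β i * M i j = y j := by
      have := congrFun h1 j
      simpa [Matrix.vecMul, dotProduct] using this
    have hexpr : ∑ i, (β i * y i) * y i * (∑ k, A k i * A k j) ^ d + 0 = y j := by
      rw [add_zero, ← hsolve]
      refine Finset.sum_congr rfl fun i _ => ?_
      have hMij : M i j = (∑ k, A k i * A k j) ^ d := rfl
      rcases hy i with h | h <;> rw [h, hMij] <;> ring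
    rw [hexpr]
    rcases hy j with h | h <;> rw [h] <;> simp [perceptronSign]
end
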